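/- The kernel of the ℂ-algebra homomorphism from the polynomial ring ℂ[s,t,u,v] to ℂ[X,Y,Z,W] determined by s ↦ X²Z, t ↦ XYZ, u ↦ Y²Z, v ↦ Z²W is the ideal generated by the single element su − t². -/

import Mathlib

noncomputable section
open MvPolynomial

/-- The ℂ-algebra homomorphism `ℂ[s,t,u,v] → ℂ[X,Y,Z,W]` determined by
`s ↦ X²Z, t ↦ XYZ, u ↦ Y²Z, v ↦ Z²W`.  Variables: `s = X 0, t = X 1, u = X 2, v = X 3`
on the source and `X = X 0, Y = X 1, Z = X 2, W = X 3` on the target. -/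
def hondaPresentation : MvPolynomial (Fin 4) ℂ →ₐ[ℂ] MvPolynomial (Fin 4) ℂ :=
  aeval ![X 0 ^ 2 * X 2, X 0 * X 1 * X 2, X 1 ^ 2 * X 2, X 2 ^ 2 * X 3]

/-!
The presentation sends monomials to monomials, acting on exponents by the linear map
`(a, b, c, d) ↦ (2a + b, b + 2c, a + b + c + 2d, d)`. Modulo `su - t²` the monomial
`s^a t^b u^c v^d` is congruent to `s^(a-k) t^(b+2k) u^(c-k) v^d` with `k = min a c`, whose exponent
has `a = 0` or `c = 0`; on such exponents the linear map is injective, so a polynomial supported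
there is killed by the presentation only if it is zero. Hence every element of the kernel is
congruent to `0` modulo `su - t²`.
-/

open Finsupp

namespace MvPolynomial

variable {R σ τ : Type*}

section CommSemiring

variable [CommSemiring R]

theorem aeval_monomials_monomial (d : σ → τ →₀ ℕ) (m : σ →₀ ℕ) (c : R) :
    aeval (fun i => monomial (d i) (1 : R)) (monomial m c)
      = monomial (linearCombination ℕ d m) c := by
  rw [aeval_monomial, linearCombination_apply]
  induction m using Finsupp.induction with
  | zero => simp
  | single_add i k m hi hk ih =>
    rw [Finsupp.prod_add_index' (by simp) (fun _ _ _ => pow_add _ _ _),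
      Finsupp.sum_add_index' (by simp) (fun _ _ _ => add_smul _ _ _), ← mul_assoc,
      mul_comm (algebraMap R _ c), mul_assoc, ih]
    simp [monomial_pow, monomial_mul]

theorem coeff_aeval_monomials_of_injOn {d : σ → τ →₀ ℕ} {S : Set (σ →₀ ℕ)}
    (hd : S.InjOn (linearCombination ℕ d)) {p : MvPolynomial σ R}
    (hp : p ∈ restrictSupport R S) {m : σ →₀ ℕ} (hm : m ∈ S) :
    coeff (linearCombination ℕ d m) (aeval (fun i => monomial (d i) (1 : R)) p)
      = coeff m p := by
  classical
  conv_lhs => rw [p.as_sum, map_sum]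
  simp_rw [aeval_monomials_monomial, coeff_sum, coeff_monomial]
  rw [Finset.sum_eq_single m]
  · simp
  · intro m' hm' hne
    exact if_neg fun h => hne (hd (hp hm') hm h)
  · intro hm'
    simp [notMem_support_iff.mp hm']

theorem eq_zero_of_aeval_monomials_eq_zero {d : σ → τ →₀ ℕ} {S : Set (σ →₀ ℕ)}
    (hd : S.InjOn (linearCombination ℕ d)) {p : MvPolynomial σ R}
    (hp : p ∈ restrictSupport R S) (h : aeval (fun i => monomial (d i) (1 : R)) p = 0) :
    p = 0 := by
  ext m
  by_cases hm : m ∈ S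
  · rw [← coeff_aeval_monomials_of_injOn hd hp hm, h, coeff_zero, coeff_zero]
  · exact notMem_support_iff.mp fun hm' => hm (hp hm')

end CommSemiring

section CommRing

variable [CommRing R]

theorem sub_dvd_monomial_sub_monomial (a b n : σ →₀ ℕ) (k : ℕ) (c : R) :
    monomial a 1 - monomial b 1 ∣ monomial (n + k • a) c - monomial (n + k • b) c := by
  have hpow (e : σ →₀ ℕ) : monomial (n + k • e) c = monomial n c * monomial e 1 ^ k := by
    rw [monomial_pow, monomial_mul, one_pow, mul_one]
  rw [hpow, hpow, ← mul_sub]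
  exact dvd_mul_of_dvd_right (sub_dvd_pow_sub_pow _ _ k) _

theorem exists_mem_restrictSupport_dvd_sub {S : Set (σ →₀ ℕ)} {r : MvPolynomial σ R}
    (hS : ∀ m, ∃ m' ∈ S, r ∣ monomial m 1 - monomial m' 1) (f : MvPolynomial σ R) :
    ∃ g ∈ restrictSupport R S, r ∣ f - g := by
  induction f using MvPolynomial.induction_on' with
  | monomial m c =>
    obtain ⟨m', hm', hr⟩ := hS m
    refine ⟨monomial m' c, by simp [hm'], ?_⟩
    have : monomial m c - monomial m' c = C c * (monomial m 1 - monomial m' 1) := by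
      simp [mul_sub, C_mul_monomial]
    exact this ▸ dvd_mul_of_dvd_right hr _
  | add p q hp hq =>
    obtain ⟨g, hg, hpg⟩ := hp
    obtain ⟨g', hg', hqg'⟩ := hq
    refine ⟨g + g', add_mem hg hg', ?_⟩
    rw [add_sub_add_comm]
    exact dvd_add hpg hqg'

end CommRing

end MvPolynomial

def hondaExponent : Fin 4 → Fin 4 →₀ ℕ :=
  ![single 0 2 + single 2 1, single 0 1 + single 1 1 + single 2 1, single 1 2 + single 2 1,
    single 2 2 + single 3 1]

theorem hondaPresentation_eq_aeval :
    hondaPresentation = aeval fun i => monomial (hondaExponent i) 1 := by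
  unfold hondaPresentation
  congr 1
  funext i
  fin_cases i <;> simp [hondaExponent, X, monomial_mul, monomial_pow]

def hondaNormal : Set (Fin 4 →₀ ℕ) := {m | m 0 = 0 ∨ m 2 = 0}

theorem linearCombination_hondaExponent_apply (m : Fin 4 →₀ ℕ) :
    linearCombination ℕ hondaExponent m 0 = 2 * m 0 + m 1 ∧
    linearCombination ℕ hondaExponent m 1 = m 1 + 2 * m 2 ∧
    linearCombination ℕ hondaExponent m 2 = m 0 + m 1 + m 2 + 2 * m 3 ∧
    linearCombination ℕ hondaExponent m 3 = m 3 := by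
  simp [linearCombination_apply, sum_fintype, Fin.sum_univ_four, hondaExponent, mul_comm]

theorem injOn_linearCombination_hondaExponent :
    hondaNormal.InjOn (linearCombination ℕ hondaExponent) := by
  intro m hm m' hm' h
  obtain ⟨h0, h1, h2, h3⟩ := linearCombination_hondaExponent_apply m
  obtain ⟨h0', h1', h2', h3'⟩ := linearCombination_hondaExponent_apply m'
  rw [h] at h0 h1 h2 h3
  simp only [hondaNormal, Set.mem_ofPred_eq] at hm hm'
  ext i
  fin_cases i <;> dsimp <;> omega

theorem exists_mem_hondaNormal_dvd_monomial_sub {R : Type*} [CommRing R] (m : Fin 4 →₀ ℕ) :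
    ∃ m' ∈ hondaNormal,
      (X 0 * X 2 - X 1 ^ 2 : MvPolynomial (Fin 4) R) ∣ monomial m 1 - monomial m' 1 := by
  set k := min (m 0) (m 2)
  set a : Fin 4 →₀ ℕ := single 0 1 + single 2 1
  set b : Fin 4 →₀ ℕ := single 1 2
  have hka : k • a ≤ m := by
    intro i
    fin_cases i <;> simp [a, k]
  refine ⟨m - k • a + k • b, ?_, ?_⟩
  · simpa [hondaNormal, a, b, k, Nat.sub_eq_zero_iff_le] using le_total (m 0) (m 2)
  · have hrel : (X 0 * X 2 - X 1 ^ 2 : MvPolynomial (Fin 4) R) = monomial a 1 - monomial b 1 := by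
      simp [a, b, X, monomial_mul, monomial_pow]
    have hdvd := sub_dvd_monomial_sub_monomial a b (m - k • a) k (1 : R)
    rwa [tsub_add_cancel_of_le hka, ← hrel] at hdvd

theorem hondaPresentation_X0_mul_X2_sub_X1_sq : hondaPresentation (X 0 * X 2 - X 1 ^ 2) = 0 := by
  simp only [hondaPresentation, map_sub, map_mul, map_pow, aeval_X, Matrix.cons_val_zero,
    Matrix.cons_val_one, Matrix.cons_val]
  ring

/-- The kernel of the ℂ-algebra homomorphism
`ℂ[s,t,u,v] → ℂ[X,Y,Z,W]`, `s ↦ X²Z, t ↦ XYZ, u ↦ Y²Z, v ↦ Z²W` is the ideal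
generated by the single element `su − t²`. -/
theorem ker_honda_presentation :
    RingHom.ker hondaPresentation.toRingHom
      = Ideal.span ({X 0 * X 2 - X 1 ^ 2} : Set (MvPolynomial (Fin 4) ℂ)) := by
  have hspan : Ideal.span {X 0 * X 2 - X 1 ^ 2} ≤ RingHom.ker hondaPresentation.toRingHom := by
    rw [Ideal.span_le, Set.singleton_subset_iff]
    exact hondaPresentation_X0_mul_X2_sub_X1_sq
  refine le_antisymm (fun f hf => ?_) hspan
  obtain ⟨g, hg, hfg⟩ :=
    exists_mem_restrictSupport_dvd_sub exists_mem_hondaNormal_dvd_monomial_sub f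
  rw [← Ideal.mem_span_singleton] at hfg
  have hg_ker : hondaPresentation g = 0 := by
    simpa using sub_mem hf (hspan hfg)
  rw [hondaPresentation_eq_aeval] at hg_ker
  have hg0 : g = 0 :=
    eq_zero_of_aeval_monomials_eq_zero injOn_linearCombination_hondaExponent hg hg_ker
  simpa [hg0] using hfg
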